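/- arXiv:0807.5037 — 3 statements merged into one kernel-verified Lean document; each statement's English description precedes it below -/
import Mathlib

section
/- Let $p$ be an odd prime, let $I_p \subseteq \mathbb{Z}/p\mathbb{Z}$ be an interval of length $(p-1)/2$, and let $N \geq 1$. Suppose $A \subseteq \{1, \dots, N\}$ is a set such that no $a \in A$ has $a \bmod p \in I_p$. Then $\max\Big( \big|\sum_{n \in A} e(n/p)\big|, \big|\sum_{n \in A} e(2n/p)\big| \Big) \geq |A|/3$. -/
/-!
After a common rotation `c = e(-(a + (p-1)/2)/p)`, every `z = c · e(n/p)` with `n ∈ A` lies on the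
closed upper unit semicircle: as `n mod p` avoids the interval, `n - a - (p-1)/2` has a
representative in `[0, p/2]`. For such `z`,
`Re (-2i z + z²) = 2 Im z + 1 - 2 (Im z)² ≥ 1` since `0 ≤ Im z ≤ 1`. Summing over `A` gives
`|A| ≤ 2 ‖∑ e(n/p)‖ + ‖∑ e(2n/p)‖ ≤ 3 max (‖∑ e(n/p)‖, ‖∑ e(2n/p)‖)`.
-/

open Complex Finset Real

lemma one_le_re_neg_two_I_mul_add_sq {z : ℂ} (hz : ‖z‖ = 1) (him : 0 ≤ z.im) :
    1 ≤ (-2 * I * z + z ^ 2).re := by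
  have hsq : z.re ^ 2 + z.im ^ 2 = 1 := by
    have h := Complex.sq_norm z
    rw [hz, normSq_apply] at h
    nlinarith
  have hre : (-2 * I * z + z ^ 2).re = 2 * z.im + z.re ^ 2 - z.im ^ 2 := by
    simp [sq, add_sub_assoc]
  nlinarith [im_le_norm z]

lemma card_le_two_mul_norm_sum_add_norm_sum_sq {ι : Type*} (A : Finset ι) (ζ : ι → ℂ) {c : ℂ}
    (hc : ‖c‖ = 1) (hζ : ∀ n ∈ A, ‖ζ n‖ = 1) (him : ∀ n ∈ A, 0 ≤ (c * ζ n).im) :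
    (#A : ℝ) ≤ 2 * ‖∑ n ∈ A, ζ n‖ + ‖∑ n ∈ A, ζ n ^ 2‖ := by
  calc (#A : ℝ) = ∑ n ∈ A, (1 : ℝ) := by simp
    _ ≤ ∑ n ∈ A, (-2 * I * (c * ζ n) + (c * ζ n) ^ 2).re := by
        refine sum_le_sum fun n hn => ?_
        exact one_le_re_neg_two_I_mul_add_sq (by rw [norm_mul, hc, hζ n hn, one_mul]) (him n hn)
    _ = (-2 * I * c * ∑ n ∈ A, ζ n + c ^ 2 * ∑ n ∈ A, ζ n ^ 2).re := by
        rw [← re_sum, mul_sum, mul_sum, ← sum_add_distrib]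
        congr 1
        refine sum_congr rfl fun n _ => by ring
    _ ≤ ‖-2 * I * c * ∑ n ∈ A, ζ n + c ^ 2 * ∑ n ∈ A, ζ n ^ 2‖ := re_le_norm _
    _ ≤ 2 * ‖∑ n ∈ A, ζ n‖ + ‖∑ n ∈ A, ζ n ^ 2‖ := by
        refine (norm_add_le _ _).trans_eq ?_
        simp [hc]

namespace ZMod

variable {p : ℕ} [NeZero p]

lemma stdAddChar_natCast (n : ℕ) :
    stdAddChar (n : ZMod p) = exp (2 * π * I * (n / p)) := by
  rw [stdAddChar_apply, toCircle_natCast, mul_div_assoc]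

lemma stdAddChar_natCast_sq (n : ℕ) :
    stdAddChar (n : ZMod p) ^ 2 = exp (2 * π * I * (2 * n / p)) := by
  rw [← AddChar.map_nsmul_eq_pow, nsmul_eq_mul, ← Nat.cast_ofNat, ← Nat.cast_mul,
    stdAddChar_natCast]
  push_cast
  rfl

lemma norm_stdAddChar (x : ZMod p) : ‖stdAddChar x‖ = 1 :=
  Circle.norm_coe _

lemma im_stdAddChar_nonneg {x : ZMod p} (hx : 2 * x.val ≤ p) : 0 ≤ (stdAddChar x).im := by
  rw [stdAddChar_apply, toCircle_apply]
  have : 2 * π * I * x.val / p = (2 * π * x.val / p : ℝ) * I := by push_cast; ring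
  rw [this, exp_ofReal_mul_I_im]
  apply Real.sin_nonneg_of_nonneg_of_le_pi (by positivity)
  rw [div_le_iff₀ (by have := NeZero.pos p; positivity)]
  have : (2 * x.val : ℝ) ≤ p := by exact_mod_cast hx
  nlinarith [pi_pos]

lemma le_val_sub_of_notMem_image_range {a x : ZMod p} {L : ℕ}
    (hx : x ∉ (range L).image (fun k : ℕ => a + (k : ZMod p))) : L ≤ (x - a).val := by
  by_contra! h
  exact hx (mem_image.2 ⟨_, mem_range.2 h, by rw [natCast_zmod_val]; ring⟩)

lemma two_mul_val_sub_le_of_notMem_image_range {a x : ZMod p}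
    (hx : x ∉ (range ((p - 1) / 2)).image (fun k : ℕ => a + (k : ZMod p))) :
    2 * (x - (a + ((p - 1) / 2 : ℕ))).val ≤ p := by
  have hL := le_val_sub_of_notMem_image_range hx
  have hlt := (x - a).val_lt
  rw [← sub_sub, val_sub (by rwa [val_natCast_of_lt (by omega)]), val_natCast_of_lt (by omega)]
  omega

end ZMod

theorem large_fourier_coefficient_general (p : ℕ) (hp : p.Prime)
    (I : Finset (ZMod p))
    (hI : ∃ a : ZMod p, I = (Finset.range ((p - 1) / 2)).image (fun k : ℕ => a + (k : ZMod p)))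
    (A : Finset ℕ)
    (hAI : ∀ n ∈ A, (n : ZMod p) ∉ I) :
    (A.card : ℝ) / 3 ≤
      max ‖∑ n ∈ A, Complex.exp (2 * Real.pi * Complex.I * ((n : ℂ) / p))‖
          ‖∑ n ∈ A, Complex.exp (2 * Real.pi * Complex.I * (2 * (n : ℂ) / p))‖ := by
  obtain ⟨a, rfl⟩ := hI
  have : NeZero p := ⟨hp.ne_zero⟩
  have key := card_le_two_mul_norm_sum_add_norm_sum_sq A (fun n => ZMod.stdAddChar (n : ZMod p))
    (ZMod.norm_stdAddChar (-(a + (((p - 1) / 2 : ℕ) : ZMod p))))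
    (fun n _ => ZMod.norm_stdAddChar _) fun n hn => by
      rw [← AddChar.map_add_eq_mul, neg_add_eq_sub]
      exact ZMod.im_stdAddChar_nonneg (ZMod.two_mul_val_sub_le_of_notMem_image_range (hAI n hn))
  simp_rw [ZMod.stdAddChar_natCast_sq, ZMod.stdAddChar_natCast] at key
  by_contra! h
  rw [max_lt_iff] at h
  linarith [h.1, h.2]

/-- Lemma 3.1: if `A ⊆ {1, …, N}` avoids an interval `I ⊆ ℤ/pℤ` of length `(p-1)/2`
modulo the odd prime `p`, then one of the Fourier coefficients of `A` at `1/p` or `2/p`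
has magnitude at least `|A|/3`. -/
theorem large_fourier_coefficient (p : ℕ) (hp : p.Prime) (hodd : Odd p)
    (I : Finset (ZMod p))
    (hI : ∃ a : ZMod p, I = (Finset.range ((p - 1) / 2)).image (fun k : ℕ => a + (k : ZMod p)))
    (N : ℕ) (hN : 1 ≤ N) (A : Finset ℕ) (hA : A ⊆ Finset.Icc 1 N)
    (hAI : ∀ n ∈ A, (n : ZMod p) ∉ I) :
    (A.card : ℝ) / 3 ≤
      max ‖∑ n ∈ A, Complex.exp (2 * Real.pi * Complex.I * ((n : ℂ) / p))‖
          ‖∑ n ∈ A, Complex.exp (2 * Real.pi * Complex.I * (2 * (n : ℂ) / p))‖ :=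
  large_fourier_coefficient_general p hp I hI A hAI
end

section
/- Let $p$ be an odd prime, let $I_p \subseteq \mathbb{Z}/p\mathbb{Z}$ be an interval of length $(p-1)/2$, and let $N \geq 1$. Suppose $A \subseteq \{1, \dots, N\}$ is a set such that no $a \in A$ has $a \bmod p \in I_p$. Then $|A| \leq 2 \big|\sum_{n \in A} e(n/p)\big| + \big|\sum_{n \in A} e(2n/p)\big|$. -/
/-!
After a common rotation `θ ↦ θ + c`, every angle `2π n / p` with `n mod p` outside an interval of
length `(p - 1) / 2` lands on the arc where `cos ≤ 0`. On that arc `1 ≤ -(2 cos θ + cos 2θ)`;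
summing over `A` and bounding the real part of each (rotated) exponential sum by its norm gives
`|A| ≤ 2 ‖∑ e(n/p)‖ + ‖∑ e(2n/p)‖`.
-/

open Finset Real

lemma one_le_neg_two_cos_add_cos_two_mul {x : ℝ} (hx : cos x ≤ 0) :
    1 ≤ -(2 * cos x + cos (2 * x)) := by
  -- with `t = cos x ∈ [-1, 0]` the right-hand side is `1 - 2 t (1 + t)`
  rw [cos_two_mul]
  nlinarith [neg_one_le_cos x]

lemma abs_sum_cos_add_le_norm_sum_exp {ι : Type*} (s : Finset ι) (x : ι → ℝ) (c : ℝ) :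
    |∑ i ∈ s, cos (x i + c)| ≤ ‖∑ i ∈ s, Complex.exp (x i * Complex.I)‖ := by
  have hre : ∑ i ∈ s, cos (x i + c) =
      (Complex.exp (c * Complex.I) * ∑ i ∈ s, Complex.exp (x i * Complex.I)).re := by
    simp only [mul_sum, Complex.re_sum, ← Complex.exp_add, ← add_mul, add_comm (c : ℂ),
      ← Complex.ofReal_add, Complex.exp_ofReal_mul_I_re]
  rw [hre]
  calc _ ≤ ‖Complex.exp (c * Complex.I) * ∑ i ∈ s, Complex.exp (x i * Complex.I)‖ :=
        Complex.abs_re_le_norm _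
    _ = _ := by rw [norm_mul, Complex.norm_exp_ofReal_mul_I, one_mul]

theorem card_le_two_norm_sum_exp_add_norm_sum_exp_two_mul {ι : Type*} (s : Finset ι)
    (x : ι → ℝ) (c : ℝ) (h : ∀ i ∈ s, cos (x i + c) ≤ 0) :
    (#s : ℝ) ≤ 2 * ‖∑ i ∈ s, Complex.exp (x i * Complex.I)‖ +
      ‖∑ i ∈ s, Complex.exp ((2 * x i : ℝ) * Complex.I)‖ := by
  have h₁ := neg_abs_le (∑ i ∈ s, cos (x i + c))
  have h₂ := neg_abs_le (∑ i ∈ s, cos (2 * x i + 2 * c))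
  have hS₁ := abs_sum_cos_add_le_norm_sum_exp s x c
  have hS₂ := abs_sum_cos_add_le_norm_sum_exp s (fun i ↦ 2 * x i) (2 * c)
  calc (#s : ℝ) = ∑ _i ∈ s, (1 : ℝ) := by simp
    _ ≤ ∑ i ∈ s, -(2 * cos (x i + c) + cos (2 * (x i + c))) :=
        sum_le_sum fun i hi ↦ one_le_neg_two_cos_add_cos_two_mul (h i hi)
    _ = -(2 * ∑ i ∈ s, cos (x i + c) + ∑ i ∈ s, cos (2 * x i + 2 * c)) := by
        simp only [mul_add, mul_sum, ← sum_add_distrib, ← sum_neg_distrib]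
    _ ≤ _ := by linarith

lemma cos_two_pi_mul_div_add_eq_of_natCast_eq {p : ℕ} [NeZero p] {m n : ℕ}
    (h : (m : ZMod p) = n) (c : ℝ) :
    cos (2 * π * m / p + c) = cos (2 * π * n / p + c) := by
  obtain ⟨q, hq⟩ := (ZMod.intCast_eq_intCast_iff_dvd_sub m n p).mp (mod_cast h)
  have hp : (p : ℝ) ≠ 0 := NeZero.ne _
  have hn : (n : ℝ) = m + p * q := by
    have := congrArg (fun z : ℤ ↦ (z : ℝ)) hq
    push_cast at this
    linarith
  rw [hn, ← cos_add_int_mul_two_pi (2 * π * m / p + c) q]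
  congr 1
  field_simp
  ring

lemma ZMod.exists_eq_add_of_notMem_image_range {l : ℕ} (a r : ZMod (2 * l + 1))
    (hr : r ∉ (range l).image fun k : ℕ ↦ a + (k : ZMod (2 * l + 1))) :
    ∃ j ≤ l, r = a + ((l + j : ℕ) : ZMod (2 * l + 1)) := by
  have hk : a + ((r - a).val : ZMod (2 * l + 1)) = r := by
    rw [ZMod.natCast_zmod_val]; ring
  have hlk : l ≤ (r - a).val := by
    by_contra! hlt
    exact hr (mem_image.mpr ⟨_, mem_range.mpr hlt, hk⟩)
  have := ZMod.val_lt (r - a)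
  exact ⟨(r - a).val - l, by omega, by rw [Nat.add_sub_cancel' hlk, hk]⟩

/-- The rotation `c` moves the complement `{a + l, …, a + 2l}` of the interval onto the arc
`[π/2, 3π/2]` of angles with nonpositive cosine. -/
lemma exists_cos_nonpos_of_natCast_notMem_interval (l : ℕ) (a : ZMod (2 * l + 1)) :
    ∃ c : ℝ, ∀ n : ℕ, ((n : ZMod (2 * l + 1)) ∉ (range l).image fun k : ℕ ↦ a + k) →
      cos (2 * π * n / (2 * l + 1 : ℕ) + c) ≤ 0 := by
  refine ⟨2 * π * ((l + 1) / 2 - a.val - l) / (2 * l + 1 : ℕ), fun n hn ↦ ?_⟩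
  obtain ⟨j, hjl, hj⟩ := ZMod.exists_eq_add_of_notMem_image_range a _ hn
  have hnat : (n : ZMod (2 * l + 1)) = (a.val + (l + j) : ℕ) := by
    rw [hj, Nat.cast_add a.val, ZMod.natCast_zmod_val]
  rw [cos_two_pi_mul_div_add_eq_of_natCast_eq hnat]
  have hangle : 2 * π * (a.val + (l + j) : ℕ) / (2 * l + 1 : ℕ) +
      2 * π * ((l + 1) / 2 - a.val - l) / (2 * l + 1 : ℕ) =
      π * ((2 * j + l + 1) / (2 * l + 1)) := by
    push_cast
    field_simp
    ring
  have hj : (j : ℝ) ≤ l := mod_cast hjl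
  have hl : (0 : ℝ) < 2 * l + 1 := by positivity
  have hlow : 1 / 2 ≤ (2 * j + l + 1 : ℝ) / (2 * l + 1) := by rw [le_div_iff₀ hl]; linarith
  have hup : (2 * j + l + 1 : ℝ) / (2 * l + 1) ≤ 3 / 2 := by rw [div_le_iff₀ hl]; linarith
  rw [hangle]
  exact cos_nonpos_of_pi_div_two_le_of_le (by nlinarith [pi_pos]) (by nlinarith [pi_pos])

theorem avoiding_interval_fourier_bound_general (p : ℕ) (hodd : Odd p)
    (I : Finset (ZMod p))
    (hI : ∃ a : ZMod p, I = (Finset.range ((p - 1) / 2)).image (fun k : ℕ => a + (k : ZMod p)))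
    (A : Finset ℕ)
    (hAI : ∀ n ∈ A, (n : ZMod p) ∉ I) :
    (A.card : ℝ) ≤
      2 * ‖∑ n ∈ A, Complex.exp (2 * Real.pi * Complex.I * ((n : ℂ) / p))‖ +
        ‖∑ n ∈ A, Complex.exp (2 * Real.pi * Complex.I * (2 * (n : ℂ) / p))‖ := by
  obtain ⟨a, rfl⟩ := hI
  obtain ⟨l, rfl⟩ := hodd
  obtain ⟨c, hc⟩ := exists_cos_nonpos_of_natCast_notMem_interval l a
  rw [show (2 * l + 1 - 1) / 2 = l by omega] at hAI
  have key := card_le_two_norm_sum_exp_add_norm_sum_exp_two_mul A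
    (fun n ↦ 2 * π * n / (2 * l + 1 : ℕ)) c fun n hn ↦ hc n (hAI n hn)
  convert key using 4
  · exact sum_congr rfl fun n _ ↦ by push_cast; ring_nf
  · push_cast; ring_nf

/-- The key inequality in the proof of the large Fourier coefficient lemma: if
`A ⊆ {1, …, N}` avoids an interval `I ⊆ ℤ/pℤ` of length `(p-1)/2` modulo the odd
prime `p`, then `|A| ≤ 2 |∑_{n ∈ A} e(n/p)| + |∑_{n ∈ A} e(2n/p)|`. -/
theorem avoiding_interval_fourier_bound (p : ℕ) (hp : p.Prime) (hodd : Odd p)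
    (I : Finset (ZMod p))
    (hI : ∃ a : ZMod p, I = (Finset.range ((p - 1) / 2)).image (fun k : ℕ => a + (k : ZMod p)))
    (N : ℕ) (hN : 1 ≤ N) (A : Finset ℕ) (hA : A ⊆ Finset.Icc 1 N)
    (hAI : ∀ n ∈ A, (n : ZMod p) ∉ I) :
    (A.card : ℝ) ≤
      2 * ‖∑ n ∈ A, Complex.exp (2 * Real.pi * Complex.I * ((n : ℂ) / p))‖ +
        ‖∑ n ∈ A, Complex.exp (2 * Real.pi * Complex.I * (2 * (n : ℂ) / p))‖ :=
  avoiding_interval_fourier_bound_general p hodd I hI A hAI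
end

section
/- Fix an integer $r \geq 1$, and assume the following exponential sum bound: for every $\varepsilon > 0$ there is $C = C(\varepsilon, r)$ such that for every integer $X \geq 1$ and every real $\xi$ with $X^2 \leq |\xi| \leq X^{r+1}$, one has $\big| \sum_{X \leq x < 2X} e(\xi/x) \big| \leq C X^{1/2 + \varepsilon}$, the sum being over integers $x$ with $X \leq x < 2X$. Then for every $\varepsilon > 0$ there is $C' = C'(\varepsilon, r)$ such that for every integer $X \geq 1$, the number of $2r$-tuples of integers $(x_1, \dots, x_{2r})$ with $X \leq x_i < 2X$ for all $i$ and $\big| \frac{1}{x_1} + \dots + \frac{1}{x_r} - \frac{1}{x_{r+1}} - \dots - \frac{1}{x_{2r}} \big| \leq X^{-(r+1)}$ is at most $C' X^{r + \varepsilon}$. -/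
/-!
Write `t(x) = 1/x₁ + ⋯ + 1/x_r - 1/x_{r+1} - ⋯ - 1/x_{2r}`, `T = X^{r+1}/4` and
`F(ζ) = ∑ₓ cos(2π t(x) ζ)`; expanding the `2r`-th power, `F(ζ) = |∑_{X ≤ n < 2X} e(ζ/n)|^{2r}`.
Since `∫₀ᵀ cos(2π t ξ) dξ ≥ T/2` whenever `|t| ≤ 1/(4T)`, the number `N` of near-solutions satisfies
`N (T/2)² ≤ ∑ₓ |∫₀ᵀ e(t(x) ξ) dξ|² = ∫₀ᵀ ∫₀ᵀ F(ξ - η) dη dξ`.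
Where `X² ≤ |ξ - η|` the hypothesis bounds `F` by `(C X^{1/2 + ε/2r})^{2r} = C^{2r} X^{r+ε}`.
On the band `|ξ - η| < X²` one integrates each cosine in `η` instead, which gives
`O(X² / (1 + X² |t(x)|))`; with all coordinates but the first fixed, the numbers `4X²/n`,
`X ≤ n < 2X`, are `1`-separated, so summing over `x` costs only `O(X^{2r+1} log X)`, that is
`O(X^r log X)` in `N`.
-/

open Finset Real ComplexConjugate

theorem Finset.sum_le_sum_range_card_of_antitone {M : Type*} [AddCommMonoid M] [PartialOrder M]
    [IsOrderedAddMonoid M] {f : ℕ → M} (hf : Antitone f) (K : Finset ℕ) :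
    ∑ k ∈ K, f k ≤ ∑ k ∈ range #K, f k := by
  induction K using Finset.induction_on_max with
  | empty => simp
  | insert a K hlt ih =>
    have haK : a ∉ K := fun h => (hlt a h).false
    have hcard : #K ≤ a := by simpa using card_le_card (fun x hx => mem_range.2 (hlt x hx))
    rw [sum_insert haK, card_insert_of_notMem haK, sum_range_succ, add_comm]
    exact add_le_add ih (hf hcard)

theorem sum_inv_one_add_le_of_separated {α : Type*} (s : Finset α) (y : α → ℝ)
    (hy : ∀ a ∈ s, ∀ b ∈ s, a ≠ b → 1 ≤ |y a - y b|) :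
    ∑ a ∈ s with 0 ≤ y a, (1 + y a)⁻¹ ≤ 1 + log #s := by
  have hinj : ∀ a ∈ {a ∈ s | 0 ≤ y a}, ∀ b ∈ {a ∈ s | 0 ≤ y a}, ⌊y a⌋₊ = ⌊y b⌋₊ → a = b := by
    intro a ha b hb hab
    rw [mem_filter] at ha hb
    by_contra hne
    have hya := Nat.floor_eq_iff ha.2 |>.1 hab
    have hyb := Nat.floor_eq_iff hb.2 |>.1 rfl
    exact (hy a ha.1 b hb.1 hne).not_gt (abs_sub_lt_iff.2 ⟨by linarith, by linarith⟩)
  calc ∑ a ∈ s with 0 ≤ y a, (1 + y a)⁻¹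
      ≤ ∑ a ∈ s with 0 ≤ y a, (1 + (⌊y a⌋₊ : ℝ))⁻¹ :=
        sum_le_sum fun a ha => by gcongr; exact Nat.floor_le (mem_filter.1 ha).2
    _ = ∑ k ∈ image (fun a => ⌊y a⌋₊) {a ∈ s | 0 ≤ y a}, (1 + (k : ℝ))⁻¹ :=
        (sum_image (f := fun k : ℕ => (1 + (k : ℝ))⁻¹) hinj).symm
    _ ≤ ∑ k ∈ range #s, (1 + (k : ℝ))⁻¹ := by
        refine (sum_le_sum_range_card_of_antitone (fun i j hij => ?_) _).trans ?_
        · gcongr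
        · refine sum_le_sum_of_subset_of_nonneg (range_subset_range.2 ?_) fun _ _ _ => by positivity
          exact card_image_le.trans (card_filter_le _ _)
    _ = harmonic #s := by simp [harmonic, add_comm]
    _ ≤ 1 + log #s := harmonic_le_one_add_log _

theorem sum_inv_one_add_abs_le_of_separated {α : Type*} (s : Finset α) (y : α → ℝ)
    (hy : ∀ a ∈ s, ∀ b ∈ s, a ≠ b → 1 ≤ |y a - y b|) :
    ∑ a ∈ s, (1 + |y a|)⁻¹ ≤ 2 * (1 + log #s) := by
  have hpos := sum_inv_one_add_le_of_separated s y hy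
  have hneg := sum_inv_one_add_le_of_separated s (fun a => -y a) fun a ha b hb hab => by
    rw [neg_sub_neg, abs_sub_comm]; exact hy a ha b hb hab
  rw [sum_filter] at hpos hneg
  have hnonneg (z : ℝ) : 0 ≤ if 0 ≤ z then (1 + z)⁻¹ else 0 := by
    split_ifs with h
    exacts [inv_nonneg.2 (by linarith), le_rfl]
  calc ∑ a ∈ s, (1 + |y a|)⁻¹
      ≤ ∑ a ∈ s, ((if 0 ≤ y a then (1 + y a)⁻¹ else 0) + if 0 ≤ -y a then (1 + -y a)⁻¹ else 0) := by
        refine sum_le_sum fun a _ => ?_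
        rcases le_total 0 (y a) with h | h
        · rw [abs_of_nonneg h, if_pos h]
          exact le_add_of_nonneg_right (hnonneg _)
        · rw [abs_of_nonpos h, if_pos (neg_nonneg.2 h)]
          exact le_add_of_nonneg_left (hnonneg _)
    _ ≤ 2 * (1 + log #s) := by rw [sum_add_distrib]; linarith

theorem one_le_four_mul_sq_mul_abs_inv_sub_inv {X n m : ℕ} (hn : n ∈ Ico X (2 * X))
    (hm : m ∈ Ico X (2 * X)) (hnm : n ≠ m) :
    1 ≤ 4 * (X : ℝ) ^ 2 * |(n : ℝ)⁻¹ - (m : ℝ)⁻¹| := by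
  rw [mem_Ico] at hn hm
  have hn0 : (0 : ℝ) < n := by norm_cast; omega
  have hm0 : (0 : ℝ) < m := by norm_cast; omega
  have hgap : (1 : ℝ) ≤ |(m : ℝ) - n| := by
    have : (1 : ℤ) ≤ |(m : ℤ) - n| := Int.one_le_abs (by omega)
    exact_mod_cast this
  have hprod : (n : ℝ) * m ≤ 4 * (X : ℝ) ^ 2 := by
    have : n * m ≤ 4 * X ^ 2 := by nlinarith
    exact_mod_cast this
  rw [inv_sub_inv hn0.ne' hm0.ne', abs_div, abs_of_pos (mul_pos hn0 hm0), ← mul_div_assoc,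
    le_div_iff₀ (mul_pos hn0 hm0)]
  nlinarith

theorem sum_sum_update_eq {ι α M : Type*} [Fintype ι] [DecidableEq ι] [AddCommMonoid M]
    (S : ι → Finset α) (i₀ : ι) (g : (ι → α) → M) :
    ∑ y ∈ Fintype.piFinset S, ∑ n ∈ S i₀, g (Function.update y i₀ n) =
      #(S i₀) • ∑ x ∈ Fintype.piFinset S, g x := by
  let σ : (ι → α) × α → (ι → α) × α := fun p => (Function.update p.1 i₀ p.2, p.1 i₀)
  have hσ : ∀ p, σ (σ p) = p := fun p => by simp [σ]
  have hmem : ∀ p ∈ Fintype.piFinset S ×ˢ S i₀, σ p ∈ Fintype.piFinset S ×ˢ S i₀ := by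
    intro p hp
    simp only [mem_product, Fintype.mem_piFinset] at hp ⊢
    refine ⟨fun i => ?_, hp.1 i₀⟩
    rcases eq_or_ne i i₀ with rfl | h
    · simpa [σ] using hp.2
    · simpa [σ, h] using hp.1 i
  calc ∑ y ∈ Fintype.piFinset S, ∑ n ∈ S i₀, g (Function.update y i₀ n)
      = ∑ p ∈ Fintype.piFinset S ×ˢ S i₀, g (σ p).1 := (sum_product' _ _ _).symm
    _ = ∑ p ∈ Fintype.piFinset S ×ˢ S i₀, g p.1 :=
        sum_nbij' σ σ hmem hmem (fun p _ => hσ p) (fun p _ => hσ p) fun _ _ => rfl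
    _ = #(S i₀) • ∑ x ∈ Fintype.piFinset S, g x := by
        rw [sum_product, smul_sum]; simp only [sum_const]

noncomputable def signedRecipSum (r : ℕ) (x : Fin (2 * r) → ℕ) : ℝ :=
  ∑ i : Fin (2 * r), (if (i : ℕ) < r then (1 : ℝ) else -1) / (x i : ℝ)

theorem signedRecipSum_update_sub_update {r : ℕ} (hr : 0 < r) (y : Fin (2 * r) → ℕ) (n m : ℕ) :
    signedRecipSum r (Function.update y ⟨0, by omega⟩ n) -
        signedRecipSum r (Function.update y ⟨0, by omega⟩ m) = (n : ℝ)⁻¹ - (m : ℝ)⁻¹ := by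
  rw [signedRecipSum, signedRecipSum, ← sum_sub_distrib, sum_eq_single ⟨0, by omega⟩]
  · simp [hr]
  · intro i _ hi
    simp [Function.update_of_ne hi]
  · simp

theorem mul_sum_inv_one_add_abs_signedRecipSum_le {r X : ℕ} (hr : 0 < r) :
    (X : ℝ) * ∑ x ∈ Fintype.piFinset (fun _ : Fin (2 * r) => Ico X (2 * X)),
        (1 + |4 * (X : ℝ) ^ 2 * signedRecipSum r x|)⁻¹ ≤
      (X : ℝ) ^ (2 * r) * (2 * (1 + log X)) := by
  set i₀ : Fin (2 * r) := ⟨0, by omega⟩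
  have hcard : #(Ico X (2 * X)) = X := by rw [Nat.card_Ico]; omega
  have hslice : ∀ y : Fin (2 * r) → ℕ, ∑ n ∈ Ico X (2 * X),
      (1 + |4 * (X : ℝ) ^ 2 * signedRecipSum r (Function.update y i₀ n)|)⁻¹ ≤ 2 * (1 + log X) := by
    intro y
    have := sum_inv_one_add_abs_le_of_separated (Ico X (2 * X))
      (fun n => 4 * (X : ℝ) ^ 2 * signedRecipSum r (Function.update y i₀ n))
      fun n hn m hm hnm => by
        rw [← mul_sub, signedRecipSum_update_sub_update hr, abs_mul, abs_of_nonneg (by positivity)]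
        exact one_le_four_mul_sq_mul_abs_inv_sub_inv hn hm hnm
    rwa [hcard] at this
  have := sum_sum_update_eq (fun _ : Fin (2 * r) => Ico X (2 * X)) i₀
    fun x => (1 + |4 * (X : ℝ) ^ 2 * signedRecipSum r x|)⁻¹
  rw [hcard, nsmul_eq_mul] at this
  rw [← this]
  calc _ ≤ ∑ _y ∈ Fintype.piFinset (fun _ : Fin (2 * r) => Ico X (2 * X)), 2 * (1 + log X) :=
        sum_le_sum fun y _ => hslice y
    _ = _ := by simp [hcard]

theorem norm_sum_pow_eq_sum_prod {α : Type*} (s : Finset α) (z : α → ℂ) (r : ℕ) :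
    ((‖∑ a ∈ s, z a‖ ^ (2 * r) : ℝ) : ℂ) =
      ∑ x ∈ Fintype.piFinset fun _ : Fin (2 * r) => s,
        ∏ i : Fin (2 * r), if (i : ℕ) < r then z (x i) else conj (z (x i)) := by
  rw [← prod_univ_sum (fun _ => s) fun (i : Fin (2 * r)) a =>
    if (i : ℕ) < r then z a else conj (z a)]
  have hfac : ∀ i : Fin (2 * r), (∑ a ∈ s, if (i : ℕ) < r then z a else conj (z a)) =
      if (i : ℕ) < r then ∑ a ∈ s, z a else conj (∑ a ∈ s, z a) := fun i => by
    split_ifs <;> simp [map_sum]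
  have hlt : #{i : Fin (2 * r) | (i : ℕ) < r} = r := by rw [Fin.card_filter_val_lt]; omega
  have hge : #{i : Fin (2 * r) | ¬(i : ℕ) < r} = r := by
    rw [filter_not, card_sdiff_of_subset (filter_subset _ _), hlt, card_univ, Fintype.card_fin]
    omega
  rw [prod_congr rfl fun i _ => hfac i, prod_ite, prod_const, prod_const, hlt, hge, ← mul_pow,
    Complex.mul_conj, Complex.normSq_eq_norm_sq, pow_mul]
  push_cast; rfl

theorem prod_exp_eq_exp_signedRecipSum (r : ℕ) (ζ : ℝ) (x : Fin (2 * r) → ℕ) :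
    (∏ i : Fin (2 * r), if (i : ℕ) < r then Complex.exp (2 * π * Complex.I * ((ζ : ℂ) / x i))
      else conj (Complex.exp (2 * π * Complex.I * ((ζ : ℂ) / x i)))) =
      Complex.exp ((2 * π * signedRecipSum r x * ζ : ℝ) * Complex.I) := by
  rw [signedRecipSum, mul_sum, sum_mul, Complex.ofReal_sum, sum_mul, Complex.exp_sum]
  refine prod_congr rfl fun i _ => ?_
  split_ifs
  · congr 1; push_cast; ring
  · rw [← Complex.exp_conj]
    congr 1
    simp only [map_mul, map_div₀, map_ofNat, Complex.conj_I, Complex.conj_ofReal,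
      Complex.conj_natCast]
    push_cast; ring

theorem norm_sum_exp_pow_eq_sum_cos (X r : ℕ) (ζ : ℝ) :
    ‖∑ n ∈ Ico X (2 * X), Complex.exp (2 * π * Complex.I * ((ζ : ℂ) / n))‖ ^ (2 * r) =
      ∑ x ∈ Fintype.piFinset (fun _ : Fin (2 * r) => Ico X (2 * X)),
        cos (2 * π * signedRecipSum r x * ζ) := by
  have := congrArg Complex.re (norm_sum_pow_eq_sum_prod (Ico X (2 * X))
    (fun n : ℕ => Complex.exp (2 * π * Complex.I * ((ζ : ℂ) / n))) r)
  simpa only [Complex.ofReal_re, Complex.re_sum, prod_exp_eq_exp_signedRecipSum,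
    Complex.exp_ofReal_mul_I_re] using this

theorem half_le_integral_cos {T t : ℝ} (hT : 0 < T) (ht : |t| ≤ (4 * T)⁻¹) :
    T / 2 ≤ ∫ ξ in (0 : ℝ)..T, cos (2 * π * t * ξ) := by
  have hTt : 4 * T * |t| ≤ 1 := by
    have := mul_le_mul_of_nonneg_left ht (by positivity : 0 ≤ 4 * T)
    rwa [mul_inv_cancel₀ (by positivity)] at this
  have hlin : ∀ ξ ∈ Set.Icc (0 : ℝ) T, 1 - ξ / T ≤ cos (2 * π * t * ξ) := by
    rintro ξ ⟨hξ0, hξT⟩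
    have h4 : 4 * |t| * ξ ≤ ξ / T := by
      rw [le_div_iff₀ hT]; nlinarith [abs_nonneg t]
    have habs : |2 * π * t * ξ| = 2 * π * (|t| * ξ) := by
      rw [abs_mul, abs_mul, abs_of_pos (by positivity : (0:ℝ) < 2 * π), abs_of_nonneg hξ0]; ring
    have hscale : 2 / π * (2 * π * (|t| * ξ)) = 4 * |t| * ξ := by field_simp; ring
    rw [← cos_abs, habs]
    refine le_trans ?_ (one_sub_mul_le_cos (by positivity) ?_)
    · linarith
    · have : |t| * ξ ≤ 1 / 4 := by nlinarith [abs_nonneg t]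
      nlinarith [pi_pos]
  calc T / 2 = ∫ ξ in (0 : ℝ)..T, (1 - ξ / T) := by
        rw [intervalIntegral.integral_sub intervalIntegrable_const
          (Continuous.intervalIntegrable (by fun_prop) _ _), intervalIntegral.integral_const,
          intervalIntegral.integral_div, integral_id, smul_eq_mul]
        field_simp; ring
    _ ≤ ∫ ξ in (0 : ℝ)..T, cos (2 * π * t * ξ) :=
        intervalIntegral.integral_mono_on hT.le (Continuous.intervalIntegrable (by fun_prop) _ _)
          (Continuous.intervalIntegrable (by fun_prop) _ _) hlin

theorem abs_mul_integral_cos_le (c ξ l u : ℝ) :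
    |c * ∫ η in l..u, cos (c * (ξ - η))| ≤ 2 := by
  have hderiv : ∀ η ∈ Set.uIcc l u,
      HasDerivAt (fun η => -sin (c * (ξ - η))) (c * cos (c * (ξ - η))) η := by
    intro η _
    exact (((hasDerivAt_id η).const_sub ξ).const_mul c).sin.neg.congr_deriv (by simp; ring)
  rw [← intervalIntegral.integral_const_mul,
    intervalIntegral.integral_eq_sub_of_hasDerivAt hderiv
      (Continuous.intervalIntegrable (by fun_prop) _ _)]
  have hu := abs_le.1 (abs_sin_le_one (c * (ξ - u)))
  have hl := abs_le.1 (abs_sin_le_one (c * (ξ - l)))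
  exact abs_le.2 ⟨by linarith, by linarith⟩

theorem abs_integral_cos_mul_sub_le {A t ξ l u : ℝ} (hlu : l ≤ u) (hA : u - l ≤ 2 * A) :
    |∫ η in l..u, cos (2 * π * t * (ξ - η))| ≤ 4 * A / (1 + 2 * π * A * |t|) := by
  set I := ∫ η in l..u, cos (2 * π * t * (ξ - η))
  have hlen : |I| ≤ u - l := by
    simpa [abs_of_nonneg (sub_nonneg.2 hlu)] using
      intervalIntegral.norm_integral_le_of_norm_le_const (C := 1) (a := l) (b := u)
        (f := fun η => cos (2 * π * t * (ξ - η))) fun η _ => abs_cos_le_one _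
  have hosc : |2 * π * t * I| ≤ 2 := abs_mul_integral_cos_le _ ξ l u
  have hA0 : 0 ≤ A := by linarith
  rw [le_div_iff₀ (by positivity)]
  have : 2 * π * A * |t| * |I| ≤ 2 * A := by
    rw [abs_mul, abs_mul, abs_of_pos (by positivity : (0:ℝ) < 2 * π)] at hosc
    nlinarith
  nlinarith

theorem integral_le_mul_of_le_Ioo {f : ℝ → ℝ} {a b M : ℝ} (hab : a ≤ b)
    (hf : IntervalIntegrable f MeasureTheory.volume a b) (h : ∀ x ∈ Set.Ioo a b, f x ≤ M) :
    ∫ x in a..b, f x ≤ (b - a) * M := by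
  simpa [mul_comm] using intervalIntegral.integral_mono_on_of_le_Ioo (μ := MeasureTheory.volume) hab
    hf intervalIntegrable_const h

theorem sum_integral_cos_mul_sub_le {ι : Type*} (τ : Finset ι) (t : ι → ℝ) {T A M ξ : ℝ}
    (hA : 0 ≤ A) (hM : 0 ≤ M) (hξ : ξ ∈ Set.Icc 0 T)
    (hF : ∀ ζ, A ≤ |ζ| → |ζ| ≤ T → ∑ x ∈ τ, cos (2 * π * t x * ζ) ≤ M) :
    ∑ x ∈ τ, ∫ η in (0 : ℝ)..T, cos (2 * π * t x * (ξ - η)) ≤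
      T * M + ∑ x ∈ τ, 4 * A / (1 + 2 * π * A * |t x|) := by
  obtain ⟨hξ0, hξT⟩ := hξ
  set l := max 0 (ξ - A)
  set u := min T (ξ + A)
  have hl : 0 ≤ l := le_max_left _ _
  have hlu : l ≤ u :=
    max_le (le_min (hξ0.trans hξT) (by linarith)) (le_min (by linarith) (by linarith))
  have huT : u ≤ T := min_le_left _ _
  have hint : ∀ (x : ι) (a b : ℝ),
      IntervalIntegrable (fun η => cos (2 * π * t x * (ξ - η))) MeasureTheory.volume a b :=
    fun x a b => Continuous.intervalIntegrable (by fun_prop) a b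
  have hsplit : ∀ x ∈ τ, ∫ η in (0 : ℝ)..T, cos (2 * π * t x * (ξ - η)) =
      (∫ η in (0 : ℝ)..l, cos (2 * π * t x * (ξ - η))) +
      (∫ η in l..u, cos (2 * π * t x * (ξ - η))) + ∫ η in u..T, cos (2 * π * t x * (ξ - η)) :=
    fun x _ => by
      rw [intervalIntegral.integral_add_adjacent_intervals (hint x 0 l) (hint x l u),
        intervalIntegral.integral_add_adjacent_intervals (hint x 0 u) (hint x u T)]
  have hleft : ∑ x ∈ τ, ∫ η in (0 : ℝ)..l, cos (2 * π * t x * (ξ - η)) ≤ (l - 0) * M := by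
    rw [← intervalIntegral.integral_finsetSum fun x _ => hint x 0 l]
    refine integral_le_mul_of_le_Ioo hl (Continuous.intervalIntegrable (by fun_prop) _ _)
      fun η ⟨hη0, hηl⟩ => ?_
    have hη : η < ξ - A := (lt_max_iff.1 hηl).resolve_left hη0.not_gt
    exact hF _ (by rw [abs_of_nonneg (by linarith)]; linarith)
      (by rw [abs_of_nonneg (by linarith)]; linarith)
  have hright : ∑ x ∈ τ, ∫ η in u..T, cos (2 * π * t x * (ξ - η)) ≤ (T - u) * M := by
    rw [← intervalIntegral.integral_finsetSum fun x _ => hint x u T]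
    refine integral_le_mul_of_le_Ioo huT (Continuous.intervalIntegrable (by fun_prop) _ _)
      fun η ⟨huη, hηT⟩ => ?_
    have hη : ξ + A < η := (min_lt_iff.1 huη).resolve_left hηT.not_gt
    exact hF _ (by rw [abs_of_nonpos (by linarith)]; linarith)
      (by rw [abs_of_nonpos (by linarith)]; linarith)
  have hmid : ∑ x ∈ τ, ∫ η in l..u, cos (2 * π * t x * (ξ - η)) ≤
      ∑ x ∈ τ, 4 * A / (1 + 2 * π * A * |t x|) :=
    sum_le_sum fun x _ => (le_abs_self _).trans (abs_integral_cos_mul_sub_le hlu (by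
      have : ξ - A ≤ l := le_max_right _ _
      have : u ≤ ξ + A := min_le_right _ _
      linarith))
  rw [sum_congr rfl hsplit, sum_add_distrib, sum_add_distrib]
  nlinarith

theorem integral_cos_mul_sub (t ξ a b : ℝ) :
    ∫ η in a..b, cos (2 * π * t * (ξ - η)) =
      cos (2 * π * t * ξ) * (∫ η in a..b, cos (2 * π * t * η)) +
        sin (2 * π * t * ξ) * ∫ η in a..b, sin (2 * π * t * η) := by
  simp_rw [mul_sub, cos_sub]
  rw [intervalIntegral.integral_add (Continuous.intervalIntegrable (by fun_prop) _ _)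
      (Continuous.intervalIntegrable (by fun_prop) _ _),
    intervalIntegral.integral_const_mul, intervalIntegral.integral_const_mul]

theorem card_le_of_cos_sum_le {ι : Type*} (τ : Finset ι) (t : ι → ℝ) {T A M : ℝ}
    (hT : 0 < T) (hA : 0 ≤ A) (hM : 0 ≤ M)
    (hF : ∀ ζ, A ≤ |ζ| → |ζ| ≤ T → ∑ x ∈ τ, cos (2 * π * t x * ζ) ≤ M) :
    (#{x ∈ τ | |t x| ≤ (4 * T)⁻¹} : ℝ) ≤
      4 * M + 4 / T * ∑ x ∈ τ, 4 * A / (1 + 2 * π * A * |t x|) := by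
  set c : ι → ℝ := fun x => ∫ ξ in (0 : ℝ)..T, cos (2 * π * t x * ξ)
  set s : ι → ℝ := fun x => ∫ ξ in (0 : ℝ)..T, sin (2 * π * t x * ξ)
  set B := ∑ x ∈ τ, 4 * A / (1 + 2 * π * A * |t x|)
  have hlower :
      (#{x ∈ τ | |t x| ≤ (4 * T)⁻¹} : ℝ) * (T / 2) ^ 2 ≤ ∑ x ∈ τ, (c x ^ 2 + s x ^ 2) := by
    rw [← nsmul_eq_mul]
    refine (card_nsmul_le_sum _ _ _ fun x hx => ?_).trans
      (sum_le_sum_of_subset_of_nonneg (filter_subset _ _) fun _ _ _ => by positivity)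
    have := half_le_integral_cos hT (mem_filter.1 hx).2
    nlinarith [sq_nonneg (s x)]
  have hdouble : ∑ x ∈ τ, (c x ^ 2 + s x ^ 2) =
      ∫ ξ in (0 : ℝ)..T, ∑ x ∈ τ, (cos (2 * π * t x * ξ) * c x + sin (2 * π * t x * ξ) * s x) := by
    rw [intervalIntegral.integral_finsetSum fun x _ =>
      Continuous.intervalIntegrable (by fun_prop) _ _]
    refine sum_congr rfl fun x _ => ?_
    rw [intervalIntegral.integral_add (Continuous.intervalIntegrable (by fun_prop) _ _)
      (Continuous.intervalIntegrable (by fun_prop) _ _),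
      intervalIntegral.integral_mul_const, intervalIntegral.integral_mul_const]
    ring
  have hupper : ∫ ξ in (0 : ℝ)..T,
      ∑ x ∈ τ, (cos (2 * π * t x * ξ) * c x + sin (2 * π * t x * ξ) * s x) ≤ T * (T * M + B) := by
    refine (intervalIntegral.integral_mono_on hT.le
      (Continuous.intervalIntegrable (by fun_prop) _ _) intervalIntegrable_const
      fun ξ hξ => ?_).trans_eq
      (by rw [intervalIntegral.integral_const, sub_zero, smul_eq_mul])
    simp only [c, s, ← integral_cos_mul_sub]
    exact sum_integral_cos_mul_sub_le τ t hA hM hξ hF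
  calc (#{x ∈ τ | |t x| ≤ (4 * T)⁻¹} : ℝ) ≤ T * (T * M + B) / (T / 2) ^ 2 :=
        (le_div_iff₀ (by positivity)).2 ((hlower.trans_eq hdouble).trans hupper)
    _ = 4 * M + 4 / T * B := by field_simp; ring

theorem card_near_solutions_le {r X : ℕ} {M : ℝ} (hr : 0 < r) (hX : 1 ≤ X) (hM : 0 ≤ M)
    (hS : ∀ ζ : ℝ, (X : ℝ) ^ 2 ≤ |ζ| → |ζ| ≤ (X : ℝ) ^ (r + 1) →
      ‖∑ n ∈ Ico X (2 * X), Complex.exp (2 * π * Complex.I * ((ζ : ℂ) / n))‖ ^ (2 * r) ≤ M) :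
    (#{x ∈ Fintype.piFinset (fun _ : Fin (2 * r) => Ico X (2 * X)) |
        |signedRecipSum r x| ≤ ((X : ℝ) ^ (r + 1))⁻¹} : ℝ) ≤
      4 * M + 128 * (X : ℝ) ^ r * (1 + log X) := by
  have hX0 : (0 : ℝ) < X := by exact_mod_cast hX
  set T : ℝ := (X : ℝ) ^ (r + 1) / 4
  have hT : 0 < T := by positivity
  have h4T : 4 * T = (X : ℝ) ^ (r + 1) := by ring
  have hcount := card_le_of_cos_sum_le (Fintype.piFinset fun _ : Fin (2 * r) => Ico X (2 * X))
    (signedRecipSum r) hT (sq_nonneg (X : ℝ)) hM fun ζ h₁ h₂ => by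
      rw [← norm_sum_exp_pow_eq_sum_cos]
      exact hS ζ h₁ (by linarith)
  rw [h4T] at hcount
  refine hcount.trans (add_le_add_right ?_ _)
  set W := ∑ x ∈ Fintype.piFinset (fun _ : Fin (2 * r) => Ico X (2 * X)),
    (1 + |4 * (X : ℝ) ^ 2 * signedRecipSum r x|)⁻¹
  have hweight : ∑ x ∈ Fintype.piFinset (fun _ : Fin (2 * r) => Ico X (2 * X)),
      4 * (X : ℝ) ^ 2 / (1 + 2 * π * (X : ℝ) ^ 2 * |signedRecipSum r x|) ≤ 4 * (X : ℝ) ^ 2 * W := by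
    rw [mul_sum]
    refine sum_le_sum fun x _ => ?_
    rw [← div_eq_mul_inv, abs_mul, abs_of_nonneg (by positivity : (0 : ℝ) ≤ 4 * (X : ℝ) ^ 2)]
    gcongr
    nlinarith [pi_gt_three, abs_nonneg (signedRecipSum r x), sq_nonneg (X : ℝ)]
  have hsum := mul_sum_inv_one_add_abs_signedRecipSum_le (X := X) hr
  have hlog : 0 ≤ 1 + log (X : ℝ) := by linarith [log_nonneg (Nat.one_le_cast.2 hX)]
  calc _ ≤ 4 / T * (4 * (X : ℝ) ^ 2 * W) := by gcongr
    _ = 64 / (X : ℝ) ^ r * (X * W) := by simp only [T]; field_simp; ring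
    _ ≤ 64 / (X : ℝ) ^ r * ((X : ℝ) ^ (2 * r) * (2 * (1 + log X))) := by gcongr
    _ = 128 * (X : ℝ) ^ r * (1 + log X) := by field_simp; ring

theorem one_add_log_le_mul_rpow {x ε : ℝ} (hx : 1 ≤ x) (hε : 0 < ε) :
    1 + log x ≤ (1 + 1 / ε) * x ^ ε := by
  have h₁ : log x ≤ x ^ ε / ε := log_le_rpow_div (by linarith) hε
  have h₂ : 1 ≤ x ^ ε := one_le_rpow hx hε.le
  rw [add_mul, one_mul, one_div_mul_eq_div]
  linarith

theorem mul_rpow_half_add_pow {C x ε : ℝ} {r : ℕ} (hx : 0 ≤ x) (hr : 0 < r) :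
    (C * x ^ ((1 : ℝ) / 2 + ε / (2 * r))) ^ (2 * r) = C ^ (2 * r) * x ^ ((r : ℝ) + ε) := by
  rw [mul_pow, ← rpow_natCast (x ^ _), ← rpow_mul hx]
  congr 2
  field_simp
  push_cast
  ring

/-- Conditional spacing bound for unit fractions: square-root cancellation for the
exponential sum `∑_{X ≤ x < 2X} e(ξ/x)` in the range `X² ≤ |ξ| ≤ X^{r+1}` implies the
spacing conjecture: at most `C'(ε,r) X^{r+ε}` tuples `(x₁, …, x_{2r})` of integers in
`[X, 2X)` satisfy `|1/x₁ + ⋯ + 1/x_r - 1/x_{r+1} - ⋯ - 1/x_{2r}| ≤ X^{-(r+1)}`. -/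
theorem exp_sum_bound_implies_spacing (r : ℕ) (hr : 1 ≤ r)
    (hexp : ∀ ε : ℝ, 0 < ε → ∃ C : ℝ, 0 < C ∧ ∀ X : ℕ, 1 ≤ X →
      ∀ ξ : ℝ, (X : ℝ) ^ 2 ≤ |ξ| → |ξ| ≤ (X : ℝ) ^ (r + 1) →
        ‖∑ x ∈ Finset.Ico X (2 * X),
            Complex.exp (2 * Real.pi * Complex.I * ((ξ : ℂ) / x))‖
          ≤ C * (X : ℝ) ^ ((1 : ℝ) / 2 + ε)) :
    ∀ ε : ℝ, 0 < ε → ∃ C' : ℝ, 0 < C' ∧ ∀ X : ℕ, 1 ≤ X →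
      (((Fintype.piFinset fun _ : Fin (2 * r) => Finset.Ico X (2 * X))).filter
          (fun x : Fin (2 * r) → ℕ =>
            |∑ i : Fin (2 * r), (if (i : ℕ) < r then (1 : ℝ) else -1) / (x i : ℝ)|
              ≤ ((X : ℝ) ^ (r + 1))⁻¹)).card
        ≤ C' * (X : ℝ) ^ ((r : ℝ) + ε) := by
  intro ε hε
  obtain ⟨C, hC, hS⟩ := hexp (ε / (2 * r)) (by positivity)
  refine ⟨4 * C ^ (2 * r) + 128 * (1 + 1 / ε), by positivity, fun X hX => ?_⟩
  have hX1 : (1 : ℝ) ≤ X := Nat.one_le_cast.2 hX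
  have hcount := card_near_solutions_le hr hX (by positivity) fun ζ h₁ h₂ =>
    pow_le_pow_left₀ (norm_nonneg _) (hS X hX ζ h₁ h₂) (2 * r)
  rw [mul_rpow_half_add_pow (by positivity) hr] at hcount
  refine hcount.trans ?_
  have hlog := mul_le_mul_of_nonneg_left (one_add_log_le_mul_rpow hX1 hε)
    (by positivity : (0 : ℝ) ≤ 128 * (X : ℝ) ^ r)
  rw [rpow_add (by positivity), rpow_natCast]
  nlinarith
end
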